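/- Rectification of a nonsingular formal vector field: let R = K[[x₁,...,xₙ]] over a field K of characteristic 0, and let v = Σ aᵢ(x)∂ᵢ be a derivation of R such that aᵢ(0) ≠ 0 for some i. Then v lies in the adjoint orbit of ∂₁, i.e. there exists an automorphism φ of R with φ ∘ v ∘ φ⁻¹ = ∂₁. -/

import Mathlib

/-!
Let `a z` be the coefficient with `a z (0) ≠ 0`. Flowing along `v` for time `X z` from the
hyperplane `X z = 0` gives an algebra endomorphism of `K⟦X⟧` that turns `v` into `∂_z`:
multiplicativity is the Leibniz rule, read through Taylor expansion in `X z`. Up to terms of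
higher order it is the linear change of variables determined by the constant part of `v`, which
is invertible because `a z (0) ≠ 0`; hence it is bijective, degree by degree. Renaming `z` to the
first variable finishes the proof.
-/

/-- Formal partial derivative `∂ᵢ` of a multivariate formal power series. -/
noncomputable def mvPderiv {n : ℕ} {K : Type*} [CommRing K] (i : Fin n)
    (f : MvPowerSeries (Fin n) K) : MvPowerSeries (Fin n) K :=
  fun m => ((m i + 1 : ℕ) : K) * MvPowerSeries.coeff (m + Finsupp.single i 1) f

open Finset Finsupp

namespace Derivation

variable {R A : Type*} [CommSemiring R] [CommSemiring A] [Algebra R A]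

theorem iterate_map_mul (D : Derivation R A A) (k : ℕ) (a b : A) :
    D^[k] (a * b) = ∑ ij ∈ antidiagonal k, k.choose ij.1 • (D^[ij.1] a * D^[ij.2] b) := by
  induction k with
  | zero => simp
  | succ k ih =>
    rw [Function.iterate_succ_apply', ih, map_sum, sum_antidiagonal_choose_succ_nsmul
      (fun i j => D^[i] a * D^[j] b), ← sum_add_distrib]
    refine sum_congr rfl fun ij hij => ?_
    rw [Nat.choose_symm_of_eq_add (mem_antidiagonal.mp hij).symm, map_nsmul, leibniz,
      smul_eq_mul, smul_eq_mul, ← nsmul_add, Function.iterate_succ_apply',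
      Function.iterate_succ_apply', mul_comm (D^[ij.2] b)]

end Derivation

theorem Finsupp.degree_erase_add_apply {σ : Type*} (z : σ) (d : σ →₀ ℕ) :
    degree (d.erase z) + d z = degree d := by
  conv_rhs => rw [← erase_add_single z d]
  rw [map_add, degree_single]

namespace MvPowerSeries

variable {σ : Type*}

section Pderiv

variable {R : Type*} [CommSemiring R]

theorem coeff_iterate_pderiv (i : σ) (k : ℕ) (f : MvPowerSeries σ R) (d : σ →₀ ℕ) :
    coeff d ((pderiv R i)^[k] f) = coeff (d + single i k) f * (d i + k).descFactorial k := by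
  induction k generalizing f with
  | zero => simp
  | succ k ih =>
    rw [Function.iterate_succ_apply, ih, coeff_pderiv, add_assoc, ← single_add,
      Finsupp.add_apply, single_eq_same, ← add_assoc, Nat.succ_descFactorial_succ]
    push_cast
    ring

theorem coeff_mul_eq_of_forall_coeff_eq {i : σ} {m : σ →₀ ℕ} (hm : m i = 0)
    {f f' g g' : MvPowerSeries σ R}
    (hf : ∀ p, p i = 0 → coeff p f = coeff p f') (hg : ∀ p, p i = 0 → coeff p g = coeff p g') :
    coeff m (f * g) = coeff m (f' * g') := by
  classical
  rw [coeff_mul, coeff_mul]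
  refine sum_congr rfl fun pq hpq => ?_
  have hpq_i : pq.1 i + pq.2 i = 0 := by rw [← Finsupp.add_apply, mem_antidiagonal.mp hpq, hm]
  rw [hf _ (by omega), hg _ (by omega)]

theorem renameEquiv_pderiv {τ : Type*} (e : σ ≃ τ) (i : σ) (f : MvPowerSeries σ R) :
    renameEquiv R e (pderiv R i f) = pderiv R (e i) (renameEquiv R e f) := by
  ext x
  obtain ⟨y, rfl⟩ : ∃ y, embDomain e.toEmbedding y = x :=
    ⟨equivMapDomain e.symm x, by
      ext; simp [embDomain_eq_mapDomain, ← equivMapDomain_eq_mapDomain]⟩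
  have hy : embDomain e.toEmbedding y + single (e i) 1 =
      embDomain e.toEmbedding (y + single i 1) := by
    rw [embDomain_add, embDomain_single, Equiv.coe_toEmbedding]
  change coeff _ (rename e.toEmbedding _) = coeff _ (pderiv R (e i) (rename e.toEmbedding f))
  rw [coeff_pderiv, hy, coeff_embDomain_rename, coeff_embDomain_rename, coeff_pderiv,
    ← Equiv.coe_toEmbedding, embDomain_apply_self]

theorem coeff_eq_inv_factorial_mul_coeff_iterate_pderiv {K : Type*} [Field K] [CharZero K]
    (i : σ) (f : MvPowerSeries σ K) (m : σ →₀ ℕ) :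
    coeff m f = ((m i).factorial : K)⁻¹ * coeff (m.erase i) ((pderiv K i)^[m i] f) := by
  rw [coeff_iterate_pderiv, erase_add_single, erase_same, zero_add, Nat.descFactorial_self,
    mul_comm, mul_inv_cancel_right₀ (Nat.cast_ne_zero.mpr (Nat.factorial_ne_zero _))]

end Pderiv

section Order

variable {R : Type*} [CommRing R]

theorem le_order_sum {ι : Type*} {s : Finset ι} {f : ι → MvPowerSeries σ R} {c : ℕ∞}
    (h : ∀ i ∈ s, c ≤ (f i).order) : c ≤ (∑ i ∈ s, f i).order :=
  Finset.sum_induction f (fun g => c ≤ g.order)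
    (fun _ _ hf hg => (le_min hf hg).trans min_order_le_add) (by simp) h

theorem le_order_pderiv (i : σ) {c : ℕ} {f : MvPowerSeries σ R} (hf : ↑(c + 1) ≤ f.order) :
    ↑c ≤ (pderiv R i f).order := by
  refine nat_le_order fun d hd => ?_
  rw [coeff_pderiv, coeff_of_lt_order, zero_mul]
  rw [map_add, degree_single]
  exact lt_of_lt_of_le (by exact_mod_cast Nat.add_lt_add_right hd 1) hf

theorem le_order_iterate {v : MvPowerSeries σ R → MvPowerSeries σ R}
    (hv : ∀ (c : ℕ) f, ↑(c + 1) ≤ f.order → ↑c ≤ (v f).order) (k : ℕ) {c : ℕ}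
    {f : MvPowerSeries σ R} (hf : ↑(c + k) ≤ f.order) : ↑c ≤ (v^[k] f).order := by
  induction k generalizing c with
  | zero => simpa using hf
  | succ k ih =>
    rw [Function.iterate_succ_apply']
    exact hv c _ (ih (by rwa [add_right_comm]))

theorem le_order_iterate_sub_iterate {v D : Derivation R (MvPowerSeries σ R) (MvPowerSeries σ R)}
    (hv : ∀ (c : ℕ) f, ↑(c + 1) ≤ f.order → ↑c ≤ (v f).order)
    (hD : ∀ (c : ℕ) f, ↑(c + 1) ≤ f.order → ↑c ≤ (D f).order)
    (hvD : ∀ (c : ℕ) f, ↑c ≤ f.order → ↑c ≤ (v f - D f).order) (k : ℕ) {c : ℕ}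
    {f : MvPowerSeries σ R} (hf : ↑(c + k) ≤ f.order) :
    ↑(c + 1) ≤ (v^[k] f - D^[k] f).order := by
  induction k generalizing c with
  | zero => simp
  | succ k ih =>
    have hsplit : v (v^[k] f) - D (D^[k] f) =
        (v (v^[k] f) - D (v^[k] f)) + D (v^[k] f - D^[k] f) := by
      rw [map_sub]; abel
    rw [Function.iterate_succ_apply', Function.iterate_succ_apply', hsplit]
    refine (le_min ?_ ?_).trans min_order_le_add
    · exact hvD _ _ (le_order_iterate hv k (by rwa [add_right_comm]))
    · exact hD _ _ (ih (by rwa [add_right_comm]))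

variable [Fintype σ]

noncomputable def vectorField (a : σ → MvPowerSeries σ R) :
    Derivation R (MvPowerSeries σ R) (MvPowerSeries σ R) :=
  ∑ j, a j • pderiv R j

theorem vectorField_apply (a : σ → MvPowerSeries σ R) (f : MvPowerSeries σ R) :
    vectorField a f = ∑ j, a j * pderiv R j f := by
  rw [vectorField, ← Derivation.coeFnAddMonoidHom_apply, map_sum, Finset.sum_apply]
  rfl

theorem le_order_vectorField_apply (a : σ → MvPowerSeries σ R) {c : ℕ} {f : MvPowerSeries σ R}
    (hf : ↑(c + 1) ≤ f.order) : ↑c ≤ (vectorField a f).order := by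
  rw [vectorField_apply]
  exact le_order_sum fun j _ => (le_order_pderiv j hf).trans (le_add_self.trans le_order_mul)

theorem le_order_vectorField_apply_of_constantCoeff_eq_zero {a : σ → MvPowerSeries σ R}
    (ha : ∀ j, constantCoeff (a j) = 0) {c : ℕ} {f : MvPowerSeries σ R} (hf : ↑c ≤ f.order) :
    ↑c ≤ (vectorField a f).order := by
  rw [vectorField_apply]
  cases c with
  | zero => simp
  | succ c =>
    refine le_order_sum fun j _ => le_trans ?_ le_order_mul
    rw [Nat.cast_succ, add_comm]
    exact add_le_add (one_le_order_iff_constCoeff_eq_zero.mpr (ha j)) (le_order_pderiv j hf)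

theorem coeff_iterate_vectorField_C (β : σ → R) (z : σ) (k : ℕ)
    (f : MvPowerSeries σ R) (p : σ →₀ ℕ)
    (hf : ∀ q, degree q = degree p + k → q z < p z + k → coeff q f = 0) :
    coeff p ((vectorField fun j => C (β j))^[k] f) =
      coeff (p + single z k) f * β z ^ k * (p z + k).descFactorial k := by
  induction k generalizing p with
  | zero => simp
  | succ k ih =>
    have hdeg : ∀ j, degree (p + single j 1) = degree p + 1 := fun j => by
      rw [map_add, degree_single]
    rw [Function.iterate_succ_apply', vectorField_apply, map_sum, Finset.sum_eq_single z]
    · have hz : (p + single z 1 : σ →₀ ℕ) z = p z + 1 := by simp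
      have hdesc : (p z + (k + 1)).descFactorial (k + 1) =
          (p z + 1 + k).descFactorial k * (p z + 1) := by
        rw [Nat.descFactorial_succ, show p z + (k + 1) = p z + 1 + k by ring, Nat.add_sub_cancel,
          mul_comm]
      have := hdeg z
      rw [coeff_C_mul, coeff_pderiv, ih _ fun q hq hqz => hf q (by omega) (by omega), hz,
        add_assoc, ← single_add, add_comm 1 k, hdesc]
      push_cast
      ring
    · intro j _ hj
      have hz : (p + single j 1 : σ →₀ ℕ) z = p z := by simp [hj.symm]
      have := hdeg j
      rw [coeff_C_mul, coeff_pderiv, ih _ fun q hq hqz => hf q (by omega) (by omega), hz,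
        hf _ (by rw [map_add, this, degree_single]; ring) (by simp [hj.symm])]
      ring
    · simp

end Order

section Filtered

variable {R : Type*} [CommRing R] {T : MvPowerSeries σ R →ₗ[R] MvPowerSeries σ R}

theorem coeff_map_eq_of_forall_coeff_eq (hT : ∀ f, f.order ≤ (T f).order)
    {f g : MvPowerSeries σ R} {m : σ →₀ ℕ}
    (h : ∀ p, degree p ≤ degree m → coeff p f = coeff p g) : coeff m (T f) = coeff m (T g) := by
  have hfg : ↑(degree m + 1) ≤ (f - g).order :=
    nat_le_order fun p hp => by rw [map_sub, h p (by omega), sub_self]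
  have := coeff_of_lt_order
    ((ENat.natCast_lt_natCast.mpr (Nat.lt_succ_self _)).trans_le (hfg.trans (hT _)))
  rwa [map_sub, map_sub, sub_eq_zero] at this

theorem coeff_eq_of_forall_coeff_map_eq
    (hlead : ∀ (d : ℕ) (f : MvPowerSeries σ R), ↑d ≤ f.order →
      (∀ m, degree m = d → coeff m (T f) = 0) → ↑(d + 1) ≤ f.order)
    {f g : MvPowerSeries σ R} {d : ℕ} (h : ∀ m, degree m ≤ d → coeff m (T f) = coeff m (T g))
    {p : σ →₀ ℕ} (hp : degree p ≤ d) : coeff p f = coeff p g := by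
  have hfg : ∀ e ≤ d + 1, ↑e ≤ (f - g).order := by
    intro e
    induction e with
    | zero => simp
    | succ e ih =>
      exact fun he => hlead e _ (ih (by omega)) fun m hm => by
        rw [map_sub, map_sub, h m (by omega), sub_self]
  have := coeff_of_lt_order
    ((ENat.natCast_lt_natCast.mpr (Nat.lt_succ_of_le hp)).trans_le (hfg _ le_rfl))
  rwa [map_sub, sub_eq_zero] at this

end Filtered

section Bijective

variable {K : Type*} [Field K] [Finite σ] {T : MvPowerSeries σ K →ₗ[K] MvPowerSeries σ K}

theorem exists_forall_coeff_map_eq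
    (hlead : ∀ (d : ℕ) (f : MvPowerSeries σ K), ↑d ≤ f.order →
      (∀ m, degree m = d → coeff m (T f) = 0) → ↑(d + 1) ≤ f.order)
    (h : MvPowerSeries σ K) (d : ℕ) :
    ∃ g, ∀ m, degree m ≤ d → coeff m (T g) = coeff m h := by
  have : Finite {m : σ →₀ ℕ // degree m ≤ d} := (finite_of_degree_le d).to_subtype
  let E : ({m : σ →₀ ℕ // degree m ≤ d} → K) →ₗ[K] MvPowerSeries σ K :=
    LinearMap.pi fun p => if hp : degree p ≤ d then LinearMap.proj ⟨p, hp⟩ else 0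
  let P : MvPowerSeries σ K →ₗ[K] ({m : σ →₀ ℕ // degree m ≤ d} → K) :=
    LinearMap.pi fun m => coeff m.1
  have hPE : ∀ u, P (E u) = u := fun u => by
    funext m
    change (if hp : degree m.1 ≤ d then LinearMap.proj ⟨m.1, hp⟩ else 0 :
      ({m : σ →₀ ℕ // degree m ≤ d} → K) →ₗ[K] K) u = u m
    rw [dif_pos m.2]
    rfl
  have hinj : Function.Injective (P ∘ₗ T ∘ₗ E) := fun u u' huu' => by
    rw [← hPE u, ← hPE u']
    funext m
    exact coeff_eq_of_forall_coeff_map_eq hlead (fun m' hm' => congrFun huu' ⟨m', hm'⟩) m.2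
  obtain ⟨u, hu⟩ := LinearMap.surjective_of_injective hinj (P h)
  exact ⟨E u, fun m hm => congrFun hu ⟨m, hm⟩⟩

theorem bijective_of_order_le_of_leading_injective (hT : ∀ f, f.order ≤ (T f).order)
    (hlead : ∀ (d : ℕ) (f : MvPowerSeries σ K), ↑d ≤ f.order →
      (∀ m, degree m = d → coeff m (T f) = 0) → ↑(d + 1) ≤ f.order) :
    Function.Bijective T := by
  refine ⟨fun f g hfg => ext fun p => coeff_eq_of_forall_coeff_map_eq hlead
    (fun m _ => by rw [hfg]) le_rfl, fun h => ?_⟩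
  choose G hG using exists_forall_coeff_map_eq hlead h
  have hcompat : ∀ {d e}, d ≤ e → ∀ p, degree p ≤ d → coeff p (G d) = coeff p (G e) :=
    fun hde _ hp => coeff_eq_of_forall_coeff_map_eq hlead
      (fun m hm => by rw [hG _ m hm, hG _ m (hm.trans hde)]) hp
  refine ⟨(fun p => coeff p (G (degree p)) : MvPowerSeries σ K), ext fun m => ?_⟩
  exact (coeff_map_eq_of_forall_coeff_eq hT fun p hp => hcompat hp p le_rfl).trans
    (hG _ m le_rfl)

end Bijective

section FlowMap

variable {K : Type*} [Field K] (z : σ) (v : Derivation K (MvPowerSeries σ K) (MvPowerSeries σ K))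

/-- `f ↦ ∑ₖ X z ^ k / k! • (v^[k] f)|_{X z = 0}`, that is, `f` composed with the flow of `v` for
time `X z` started on the hyperplane `X z = 0`. -/
noncomputable def flowLinearMap : MvPowerSeries σ K →ₗ[K] MvPowerSeries σ K where
  toFun f m := ((m z).factorial : K)⁻¹ * coeff (m.erase z) (((v : _ →ₗ[K] _) ^ m z) f)
  map_add' f g := by funext m; simp only [map_add, mul_add]; rfl
  map_smul' c f := by funext m; simp only [map_smul, smul_eq_mul, mul_left_comm]; rfl

variable {z v}

theorem coeff_flowLinearMap (f : MvPowerSeries σ K) (m : σ →₀ ℕ) :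
    coeff m (flowLinearMap z v f) = ((m z).factorial : K)⁻¹ * coeff (m.erase z) (v^[m z] f) := by
  rw [← Derivation.coeFn_coe, ← Module.End.pow_apply]; rfl

theorem coeff_flowLinearMap_of_eq_zero (f : MvPowerSeries σ K) {m : σ →₀ ℕ} (hm : m z = 0) :
    coeff m (flowLinearMap z v f) = coeff m f := by
  rw [coeff_flowLinearMap, hm, erase_of_notMem_support (by simpa using hm), Nat.factorial_zero,
    Nat.cast_one, inv_one, one_mul, Function.iterate_zero_apply]

theorem flowLinearMap_one : flowLinearMap z v 1 = 1 := by
  classical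
  ext m
  cases hk : m z with
  | zero => exact coeff_flowLinearMap_of_eq_zero 1 hk
  | succ k =>
    have hm0 : m ≠ 0 := fun h => by simp [h] at hk
    rw [coeff_flowLinearMap, hk, Function.iterate_succ_apply, Derivation.map_one_eq_zero,
      iterate_map_zero, map_zero, mul_zero, coeff_one, if_neg hm0]

variable [CharZero K]

theorem flowLinearMap_apply_derivation (f : MvPowerSeries σ K) :
    flowLinearMap z v (v f) = pderiv K z (flowLinearMap z v f) := by
  ext m
  rw [coeff_pderiv, coeff_flowLinearMap, coeff_flowLinearMap, Finsupp.add_apply, single_eq_same,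
    erase_add, erase_single, add_zero, ← Function.iterate_succ_apply, Nat.factorial_succ]
  have : ((m z).factorial : K) ≠ 0 := Nat.cast_ne_zero.mpr (Nat.factorial_ne_zero _)
  push_cast
  field_simp

theorem flowLinearMap_iterate_derivation (k : ℕ) (f : MvPowerSeries σ K) :
    flowLinearMap z v (v^[k] f) = (pderiv K z)^[k] (flowLinearMap z v f) :=
  Function.Semiconj.iterate_right (f := flowLinearMap z v) flowLinearMap_apply_derivation k f

/-- Both sides are determined by their Taylor coefficients in `X z`; by Leibniz's rule for `v`
and for `pderiv K z` these reduce to products of coefficients off `X z`, where the flow map is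
the identity. -/
theorem flowLinearMap_mul (f g : MvPowerSeries σ K) :
    flowLinearMap z v (f * g) = flowLinearMap z v f * flowLinearMap z v g := by
  ext m
  rw [coeff_eq_inv_factorial_mul_coeff_iterate_pderiv z (_ * _), coeff_flowLinearMap,
    Derivation.iterate_map_mul, Derivation.iterate_map_mul, map_sum, map_sum]
  congr 1
  refine sum_congr rfl fun ij _ => ?_
  rw [map_nsmul, map_nsmul, ← flowLinearMap_iterate_derivation, ← flowLinearMap_iterate_derivation,
    coeff_mul_eq_of_forall_coeff_eq erase_same (fun p hp => coeff_flowLinearMap_of_eq_zero _ hp)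
      (fun p hp => coeff_flowLinearMap_of_eq_zero _ hp)]

variable (z v)

noncomputable def flowMap : MvPowerSeries σ K →ₐ[K] MvPowerSeries σ K :=
  AlgHom.ofLinearMap (flowLinearMap z v) flowLinearMap_one flowLinearMap_mul

end FlowMap

section Rectification

variable {K : Type*} [Field K] {z : σ}

theorem le_order_flowLinearMap {v : Derivation K (MvPowerSeries σ K) (MvPowerSeries σ K)}
    (hv : ∀ (c : ℕ) f, ↑(c + 1) ≤ f.order → ↑c ≤ (v f).order) (f : MvPowerSeries σ K) :
    f.order ≤ (flowLinearMap z v f).order := by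
  refine le_order fun m hm => ?_
  rw [coeff_flowLinearMap, coeff_of_lt_order, mul_zero]
  have : ↑(degree (m.erase z) + 1 + m z) ≤ f.order := by
    rw [add_right_comm, degree_erase_add_apply]
    exact Order.add_one_le_of_lt hm
  exact (ENat.natCast_lt_natCast.mpr (Nat.lt_succ_self _)).trans_le (le_order_iterate hv _ this)

theorem coeff_flowLinearMap_eq_of_degree_le_order
    {v D : Derivation K (MvPowerSeries σ K) (MvPowerSeries σ K)}
    (hv : ∀ (c : ℕ) f, ↑(c + 1) ≤ f.order → ↑c ≤ (v f).order)
    (hD : ∀ (c : ℕ) f, ↑(c + 1) ≤ f.order → ↑c ≤ (D f).order)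
    (hvD : ∀ (c : ℕ) f, ↑c ≤ f.order → ↑c ≤ (v f - D f).order)
    {f : MvPowerSeries σ K} {m : σ →₀ ℕ} (hm : ↑(degree m) ≤ f.order) :
    coeff m (flowLinearMap z v f) = coeff m (flowLinearMap z D f) := by
  rw [coeff_flowLinearMap, coeff_flowLinearMap, ← sub_eq_zero, ← mul_sub, ← map_sub,
    coeff_of_lt_order, mul_zero]
  exact (ENat.natCast_lt_natCast.mpr (Nat.lt_succ_self _)).trans_le
    (le_order_iterate_sub_iterate hv hD hvD (m z) (by rwa [degree_erase_add_apply]))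

variable [CharZero K] [Fintype σ]

/-- Once the coefficients of degree `d` with smaller exponent of `X z` than `p` are known to
vanish, `coeff_iterate_vectorField_C` shows that the coefficient at `p` of the flow map is
`β z ^ p z * coeff p f`. -/
theorem coeff_eq_zero_of_coeff_flowLinearMap_vectorField_C_eq_zero {β : σ → K} (hz : β z ≠ 0)
    {f : MvPowerSeries σ K} {d : ℕ}
    (h : ∀ m, degree m = d → coeff m (flowLinearMap z (vectorField fun j => C (β j)) f) = 0)
    {p : σ →₀ ℕ} (hp : degree p = d) : coeff p f = 0 := by
  induction hpz : p z using Nat.strong_induction_on generalizing p with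
  | _ k ih =>
    have hdeg := degree_erase_add_apply z p
    have := h p hp
    rw [coeff_flowLinearMap, coeff_iterate_vectorField_C β z _ f (p.erase z)
      fun q hq hqz => ih (q z) (by simpa [hpz] using hqz) (by omega) rfl] at this
    subst hpz
    simpa [erase_add_single, hz, Nat.factorial_ne_zero] using this

theorem le_order_of_coeff_flowLinearMap_vectorField_eq_zero {a : σ → MvPowerSeries σ K}
    (hz : constantCoeff (a z) ≠ 0) {d : ℕ} {f : MvPowerSeries σ K} (hf : ↑d ≤ f.order)
    (h : ∀ m, degree m = d → coeff m (flowLinearMap z (vectorField a) f) = 0) :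
    ↑(d + 1) ≤ f.order := by
  have hvD : ∀ (c : ℕ) f, ↑c ≤ f.order →
      ↑c ≤ (vectorField a f - vectorField (fun j => C (constantCoeff (a j))) f).order := by
    intro c f hf
    have : vectorField a f - vectorField (fun j => C (constantCoeff (a j))) f =
        vectorField (fun j => a j - C (constantCoeff (a j))) f := by
      simp only [vectorField_apply, ← Finset.sum_sub_distrib, sub_mul]
    exact this ▸ le_order_vectorField_apply_of_constantCoeff_eq_zero (by simp) hf
  refine nat_le_order fun p hp => ?_
  rcases (Nat.lt_succ_iff.mp hp).lt_or_eq with hlt | rfl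
  · exact coeff_of_lt_order ((by exact_mod_cast hlt : ((degree p : ℕ) : ℕ∞) < d).trans_le hf)
  · refine coeff_eq_zero_of_coeff_flowLinearMap_vectorField_C_eq_zero
      (β := fun j => constantCoeff (a j)) hz (fun m hm => ?_) rfl
    rw [← coeff_flowLinearMap_eq_of_degree_le_order (fun _ _ => le_order_vectorField_apply a)
      (fun _ _ => le_order_vectorField_apply _) hvD (hm ▸ hf), h m hm]

theorem flowMap_vectorField_bijective {a : σ → MvPowerSeries σ K}
    (hz : constantCoeff (a z) ≠ 0) : Function.Bijective (flowMap z (vectorField a)) :=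
  bijective_of_order_le_of_leading_injective
    (le_order_flowLinearMap fun _ _ => le_order_vectorField_apply a)
    fun _ _ => le_order_of_coeff_flowLinearMap_vectorField_eq_zero hz

theorem exists_algEquiv_map_vectorField_eq_pderiv {a : σ → MvPowerSeries σ K}
    (hz : constantCoeff (a z) ≠ 0) :
    ∃ φ : MvPowerSeries σ K ≃ₐ[K] MvPowerSeries σ K,
      ∀ f, φ (vectorField a f) = pderiv K z (φ f) :=
  ⟨AlgEquiv.ofBijective _ (flowMap_vectorField_bijective hz), flowLinearMap_apply_derivation⟩

end Rectification

end MvPowerSeries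

theorem mvPderiv_eq_pderiv {n : ℕ} {K : Type*} [CommRing K] (i : Fin n)
    (f : MvPowerSeries (Fin n) K) : mvPderiv i f = MvPowerSeries.pderiv K i f := by
  ext m
  change ((m i + 1 : ℕ) : K) * _ = _
  rw [MvPowerSeries.coeff_pderiv, mul_comm]
  push_cast
  rfl

/-- rectification of a nonsingular formal vector field: if
`v = Σ aᵢ(x)∂ᵢ` is a derivation of `R = K[[x₁,…,xₙ]]` with `aᵢ(0) ≠ 0` for some `i`,
then `v` lies in the adjoint orbit of `∂₁`: there is an automorphism `φ` of `R` with
`φ ∘ v ∘ φ⁻¹ = ∂₁`. -/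
theorem rectification_of_nonsingular_vector_field
    (K : Type*) [Field K] [CharZero K] (n : ℕ) (hn : 0 < n)
    (v : Derivation K (MvPowerSeries (Fin n) K) (MvPowerSeries (Fin n) K))
    (a : Fin n → MvPowerSeries (Fin n) K)
    (hv : ∀ f, v f = ∑ i, a i * mvPderiv i f)
    (ha : ∃ i, MvPowerSeries.constantCoeff (a i) ≠ 0) :
    ∃ φ : MvPowerSeries (Fin n) K ≃ₐ[K] MvPowerSeries (Fin n) K,
      ∀ f, φ (v (φ.symm f)) = mvPderiv (⟨0, hn⟩ : Fin n) f := by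
  obtain ⟨i, hi⟩ := ha
  have hva : v = MvPowerSeries.vectorField a := Derivation.ext fun f => by
    simp only [hv, MvPowerSeries.vectorField_apply, mvPderiv_eq_pderiv]
  obtain ⟨ψ, hψ⟩ := MvPowerSeries.exists_algEquiv_map_vectorField_eq_pderiv hi
  refine ⟨ψ.trans (MvPowerSeries.renameEquiv K (Equiv.swap i ⟨0, hn⟩)), fun f => ?_⟩
  rw [AlgEquiv.trans_apply, AlgEquiv.symm_trans_apply, hva, hψ, AlgEquiv.apply_symm_apply,
    MvPowerSeries.renameEquiv_pderiv, Equiv.swap_apply_left, AlgEquiv.apply_symm_apply,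
    mvPderiv_eq_pderiv]
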